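/- Let G be a connected capacitated domination instance, let u ∈ V, and for i∈{0,1,2} let R_i = {v ∈ V : dist_G(u,v) ≡ i (mod 3)} and let G_i be the corresponding subinstance. Then: (a) every feasible demand assignment for G is also feasible for each G_i, so OPT(G_i) ≤ OPT(G) for each i; (b) if f_i is a feasible demand assignment for G_i for i=0,1,2, then f = f_0+f_1+f_2 is a feasible demand assignment for G with w(f) ≤ w(f_0)+w(f_1)+w(f_2); consequently, if each f_i is a minimum-cost feasible assignment for G_i, then w(f) ≤ 3·OPT(G). -/

import Mathlib

open Finset

variable {V : Type*} [Fintype V] [DecidableEq V]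

/-- The closed neighborhood `N[v]` of a vertex. -/
def closedNbhd (G : SimpleGraph V) [DecidableRel G.Adj] (v : V) : Finset V :=
  insert v (G.neighborFinset v)

/-- A demand assignment: nonnegative, supported on closed neighborhoods. -/
def IsAssignment (G : SimpleGraph V) [DecidableRel G.Adj] (f : V → V → ℝ) : Prop :=
  (∀ u v, 0 ≤ f u v) ∧ ∀ u v, v ∉ closedNbhd G u → f u v = 0

/-- Feasibility: the demand of every vertex is fully assigned. -/
def Feasible (G : SimpleGraph V) [DecidableRel G.Adj] (d : V → ℝ) (f : V → V → ℝ) : Prop :=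
  IsAssignment G f ∧ ∀ u, d u ≤ ∑ v ∈ closedNbhd G u, f u v

/-- Multiplicity `x_f(v) = ⌈(Σ_{u∈N[v]} f(u,v))/c(v)⌉`. -/
noncomputable def mult (G : SimpleGraph V) [DecidableRel G.Adj] (c : V → ℝ)
    (f : V → V → ℝ) (v : V) : ℤ :=
  ⌈(∑ u ∈ closedNbhd G v, f u v) / c v⌉

/-- Cost of a demand assignment. -/
noncomputable def cost (G : SimpleGraph V) [DecidableRel G.Adj] (w c : V → ℝ)
    (f : V → V → ℝ) : ℝ :=
  ∑ v, w v * (mult G c f v : ℝ)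

/-- Optimal cost of a feasible demand assignment. -/
noncomputable def OPT (G : SimpleGraph V) [DecidableRel G.Adj] (w c d : V → ℝ) : ℝ :=
  sInf {r | ∃ f, Feasible G d f ∧ cost G w c f = r}

/-- Feasibility for the LP relaxation of capacitated domination. -/
def LPFeasible (G : SimpleGraph V) [DecidableRel G.Adj] (c d : V → ℝ)
    (x : V → ℝ) (f : V → V → ℝ) : Prop :=
  (∀ u, 0 ≤ x u) ∧ IsAssignment G f ∧
  (∀ u, d u ≤ ∑ v ∈ closedNbhd G u, f u v) ∧
  (∀ u, ∑ v ∈ closedNbhd G u, f v u ≤ c u * x u) ∧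
  (∀ u, ∀ v ∈ closedNbhd G u, f v u ≤ d v * x u)

/-- Optimal value `OPT_f(G)` of the LP relaxation. -/
noncomputable def OPTf (G : SimpleGraph V) [DecidableRel G.Adj] (w c d : V → ℝ) : ℝ :=
  sInf {r | ∃ x f, LPFeasible G c d x f ∧ ∑ u, w u * x u = r}

/-- The subinstance graph on the same vertex set: keep exactly the edges of `G`
incident to a vertex of `R` (vertices outside `V_i = ∪_{v∈R} N[v]` become
isolated). -/
def subGraph (G : SimpleGraph V) (R : Finset V) : SimpleGraph V where
  Adj a b := G.Adj a b ∧ (a ∈ R ∨ b ∈ R)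
  symm := ⟨fun a b h => ⟨h.1.symm, h.2.symm⟩⟩
  loopless := ⟨fun a h => G.irrefl h.1⟩

instance (G : SimpleGraph V) [DecidableRel G.Adj] (R : Finset V) :
    DecidableRel (subGraph G R).Adj :=
  fun a b => inferInstanceAs (Decidable (G.Adj a b ∧ (a ∈ R ∨ b ∈ R)))

/-- The demands of the subinstance: `d` on `R`, zero elsewhere. -/
def subDemand (d : V → ℝ) (R : Finset V) : V → ℝ :=
  fun v => if v ∈ R then d v else 0

/-- Vertices whose distance to `u` is congruent to `i` mod 3. -/
noncomputable def distClass (G : SimpleGraph V) (u : V) (i : ℕ) : Finset V :=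
  Finset.univ.filter (fun v => G.dist u v % 3 = i)

/-! Restricting a feasible assignment of `G` to the edges of a subinstance keeps the
demands of `R` covered and can only lower every load, so `OPT(G_i) ≤ OPT(G)`.
Conversely, an assignment of `G_i` is supported on edges of `G`, where it has the same
loads, and every vertex lies in some class `R_i`; hence `f₀ + f₁ + f₂` is feasible
for `G`, and since `⌈a + b⌉ ≤ ⌈a⌉ + ⌈b⌉` its cost is at most the sum of the three costs. -/

lemma subGraph_le {W : Type*} {G : SimpleGraph W} (R : Finset W) : subGraph G R ≤ G :=
  fun _ _ h => h.1

section ClosedNbhd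

variable {G H : SimpleGraph V} [DecidableRel G.Adj] [DecidableRel H.Adj]

lemma mem_closedNbhd {a v : V} : v ∈ closedNbhd G a ↔ v = a ∨ G.Adj a v := by
  simp [closedNbhd, SimpleGraph.mem_neighborFinset]

lemma self_mem_closedNbhd (a : V) : a ∈ closedNbhd G a :=
  mem_closedNbhd.2 (Or.inl rfl)

lemma mem_closedNbhd_comm {a v : V} : v ∈ closedNbhd G a ↔ a ∈ closedNbhd G v := by
  simp only [mem_closedNbhd, eq_comm, G.adj_comm]

lemma closedNbhd_mono (hHG : H ≤ G) (a : V) : closedNbhd H a ⊆ closedNbhd G a := fun _ hv =>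
  mem_closedNbhd.2 ((mem_closedNbhd.1 hv).imp id fun h => hHG h)

lemma closedNbhd_subGraph_of_mem {R : Finset V} {a : V} (ha : a ∈ R) :
    closedNbhd (subGraph G R) a = closedNbhd G a := by
  refine (closedNbhd_mono (subGraph_le R) a).antisymm fun v hv => ?_
  exact mem_closedNbhd.2 ((mem_closedNbhd.1 hv).imp id fun h => ⟨h, Or.inl ha⟩)

end ClosedNbhd

section Assignments

variable {G H : SimpleGraph V} [DecidableRel G.Adj] [DecidableRel H.Adj]

lemma IsAssignment.mono (hHG : H ≤ G) {f : V → V → ℝ} (hf : IsAssignment H f) :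
    IsAssignment G f :=
  ⟨hf.1, fun a b hb => hf.2 a b fun hb' => hb (closedNbhd_mono hHG a hb')⟩

lemma IsAssignment.add {f g : V → V → ℝ} (hf : IsAssignment G f) (hg : IsAssignment G g) :
    IsAssignment G (fun a b => f a b + g a b) :=
  ⟨fun a b => add_nonneg (hf.1 a b) (hg.1 a b),
    fun a b hb => by simp only [hf.2 a b hb, hg.2 a b hb, add_zero]⟩

lemma IsAssignment.sum_closedNbhd_eq (hHG : H ≤ G) {f : V → V → ℝ} (hf : IsAssignment H f)
    (v : V) : ∑ a ∈ closedNbhd G v, f a v = ∑ a ∈ closedNbhd H v, f a v :=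
  (Finset.sum_subset (closedNbhd_mono hHG v) fun a _ ha =>
    hf.2 a v fun hv => ha (mem_closedNbhd_comm.1 hv)).symm

lemma exists_feasible (G : SimpleGraph V) [DecidableRel G.Adj] (d : V → ℝ) :
    ∃ f, Feasible G d f := by
  refine ⟨fun a b => if b = a then max (d a) 0 else 0, ⟨fun a b => ?_, fun a b hb => ?_⟩,
    fun a => ?_⟩
  · dsimp only
    split_ifs
    exacts [le_max_right _ _, le_rfl]
  · exact if_neg (by rintro rfl; exact hb (self_mem_closedNbhd b))
  · rw [Finset.sum_ite_eq' _ a, if_pos (self_mem_closedNbhd a)]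
    exact le_max_left _ _

lemma Feasible.le_sum_of_mem {R : Finset V} {d : V → ℝ} {f : V → V → ℝ}
    (hf : Feasible (subGraph G R) (subDemand d R) f) {a : V} (ha : a ∈ R) :
    d a ≤ ∑ v ∈ closedNbhd G a, f a v := by
  simpa [subDemand, ha, closedNbhd_subGraph_of_mem ha] using hf.2 a

lemma feasible_add_three {R₀ R₁ R₂ : Finset V} (hcover : ∀ a, a ∈ R₀ ∨ a ∈ R₁ ∨ a ∈ R₂)
    {d : V → ℝ} {f₀ f₁ f₂ : V → V → ℝ}
    (h₀ : Feasible (subGraph G R₀) (subDemand d R₀) f₀)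
    (h₁ : Feasible (subGraph G R₁) (subDemand d R₁) f₁)
    (h₂ : Feasible (subGraph G R₂) (subDemand d R₂) f₂) :
    Feasible G d (fun a b => f₀ a b + f₁ a b + f₂ a b) := by
  have hF := ((h₀.1.mono (subGraph_le R₀)).add (h₁.1.mono (subGraph_le R₁))).add
    (h₂.1.mono (subGraph_le R₂))
  refine ⟨hF, fun a => ?_⟩
  have n₀ := h₀.1.1 a; have n₁ := h₁.1.1 a; have n₂ := h₂.1.1 a
  rcases hcover a with ha | ha | ha
  · exact (h₀.le_sum_of_mem ha).trans (sum_le_sum fun v _ => by linarith [n₁ v, n₂ v])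
  · exact (h₁.le_sum_of_mem ha).trans (sum_le_sum fun v _ => by linarith [n₀ v, n₂ v])
  · exact (h₂.le_sum_of_mem ha).trans (sum_le_sum fun v _ => by linarith [n₀ v, n₁ v])

end Assignments

section Cost

variable {G H : SimpleGraph V} [DecidableRel G.Adj] [DecidableRel H.Adj] {w c : V → ℝ}

lemma cost_nonneg (hw : ∀ v, 0 ≤ w v) (hc : ∀ v, 0 < c v) {f : V → V → ℝ}
    (hf : ∀ a b, 0 ≤ f a b) : 0 ≤ cost G w c f :=
  sum_nonneg fun v _ => mul_nonneg (hw v) <| Int.cast_nonneg <| Int.ceil_nonneg <|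
    div_nonneg (sum_nonneg fun a _ => hf a v) (hc v).le

lemma cost_le_cost (hw : ∀ v, 0 ≤ w v) (hc : ∀ v, 0 < c v) {f g : V → V → ℝ}
    (hload : ∀ v, ∑ a ∈ closedNbhd H v, g a v ≤ ∑ a ∈ closedNbhd G v, f a v) :
    cost H w c g ≤ cost G w c f :=
  sum_le_sum fun v _ => mul_le_mul_of_nonneg_left
    (Int.cast_le.2 <| Int.ceil_le_ceil <| div_le_div_of_nonneg_right (hload v) (hc v).le) (hw v)

lemma cost_add_le (hw : ∀ v, 0 ≤ w v) (f g : V → V → ℝ) :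
    cost G w c (fun a b => f a b + g a b) ≤ cost G w c f + cost G w c g := by
  simp only [cost, mult, ← sum_add_distrib, ← mul_add]
  refine sum_le_sum fun v _ => mul_le_mul_of_nonneg_left ?_ (hw v)
  rw [sum_add_distrib, add_div]
  exact_mod_cast Int.ceil_add_le _ _

lemma IsAssignment.cost_eq (hHG : H ≤ G) {f : V → V → ℝ} (hf : IsAssignment H f) :
    cost G w c f = cost H w c f := by
  simp only [cost, mult, hf.sum_closedNbhd_eq hHG]

lemma OPT_le_cost (hw : ∀ v, 0 ≤ w v) (hc : ∀ v, 0 < c v) {d : V → ℝ} {f : V → V → ℝ}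
    (hf : Feasible G d f) : OPT G w c d ≤ cost G w c f :=
  csInf_le ⟨0, by rintro _ ⟨g, hg, rfl⟩; exact cost_nonneg hw hc hg.1.1⟩ ⟨f, hf, rfl⟩

end Cost

section Restriction

variable {G : SimpleGraph V} [DecidableRel G.Adj] {R : Finset V}

def restrictToEdges (H : SimpleGraph V) [DecidableRel H.Adj] (f : V → V → ℝ) : V → V → ℝ :=
  fun a b => if b ∈ closedNbhd H a then f a b else 0

lemma restrictToEdges_le {H : SimpleGraph V} [DecidableRel H.Adj] {f : V → V → ℝ}
    (hf : ∀ a b, 0 ≤ f a b) (a b : V) : restrictToEdges H f a b ≤ f a b := by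
  unfold restrictToEdges
  split_ifs
  exacts [le_rfl, hf a b]

lemma Feasible.restrict_subGraph {d : V → ℝ} {f : V → V → ℝ} (hf : Feasible G d f) :
    Feasible (subGraph G R) (subDemand d R) (restrictToEdges (subGraph G R) f) := by
  have hnonneg : ∀ a b, 0 ≤ restrictToEdges (subGraph G R) f a b := fun a b => by
    unfold restrictToEdges
    split_ifs
    exacts [hf.1.1 a b, le_rfl]
  refine ⟨⟨hnonneg, fun a b hb => if_neg hb⟩, fun a => ?_⟩
  by_cases ha : a ∈ R
  · rw [subDemand, if_pos ha]
    refine (hf.2 a).trans_eq (sum_congr (closedNbhd_subGraph_of_mem ha).symm fun b hb => ?_)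
    exact (if_pos hb).symm
  · rw [subDemand, if_neg ha]
    exact sum_nonneg fun b _ => hnonneg a b

lemma cost_restrict_subGraph_le {w c : V → ℝ} (hw : ∀ v, 0 ≤ w v) (hc : ∀ v, 0 < c v)
    {f : V → V → ℝ} (hf : ∀ a b, 0 ≤ f a b) :
    cost (subGraph G R) w c (restrictToEdges (subGraph G R) f) ≤ cost G w c f :=
  cost_le_cost hw hc fun v =>
    (sum_le_sum fun a _ => restrictToEdges_le hf a v).trans <|
      sum_le_sum_of_subset_of_nonneg (closedNbhd_mono (subGraph_le R) v) fun a _ _ => hf a v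

lemma OPT_subGraph_le {w c : V → ℝ} (hw : ∀ v, 0 ≤ w v) (hc : ∀ v, 0 < c v) (d : V → ℝ) :
    OPT (subGraph G R) w c (subDemand d R) ≤ OPT G w c d := by
  obtain ⟨f₀, hf₀⟩ := exists_feasible G d
  refine le_csInf ⟨_, f₀, hf₀, rfl⟩ ?_
  rintro _ ⟨f, hf, rfl⟩
  exact (OPT_le_cost hw hc hf.restrict_subGraph).trans (cost_restrict_subGraph_le hw hc hf.1.1)

end Restriction

lemma mem_distClass_or {W : Type*} [Fintype W] (G : SimpleGraph W) (u v : W) :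
    v ∈ distClass G u 0 ∨ v ∈ distClass G u 1 ∨ v ∈ distClass G u 2 := by
  simp only [distClass, mem_filter, mem_univ, true_and]
  omega

theorem three_layer_decomposition_general (G : SimpleGraph V) [DecidableRel G.Adj]
    (w c d : V → ℝ) (hw : ∀ v, 0 ≤ w v) (hc : ∀ v, 0 < c v)
    (u : V) :
    (∀ i : ℕ, i < 3 → ∀ f, Feasible G d f →
        Feasible (subGraph G (distClass G u i)) (subDemand d (distClass G u i))
          (fun a b => if b ∈ closedNbhd (subGraph G (distClass G u i)) a then f a b else 0) ∧
        cost (subGraph G (distClass G u i)) w c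
          (fun a b => if b ∈ closedNbhd (subGraph G (distClass G u i)) a then f a b else 0) ≤
          cost G w c f ∧
        OPT (subGraph G (distClass G u i)) w c (subDemand d (distClass G u i)) ≤
          OPT G w c d) ∧
    (∀ f₀ f₁ f₂,
        Feasible (subGraph G (distClass G u 0)) (subDemand d (distClass G u 0)) f₀ →
        Feasible (subGraph G (distClass G u 1)) (subDemand d (distClass G u 1)) f₁ →
        Feasible (subGraph G (distClass G u 2)) (subDemand d (distClass G u 2)) f₂ →
        Feasible G d (fun a b => f₀ a b + f₁ a b + f₂ a b) ∧
        cost G w c (fun a b => f₀ a b + f₁ a b + f₂ a b) ≤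
          cost (subGraph G (distClass G u 0)) w c f₀ +
          cost (subGraph G (distClass G u 1)) w c f₁ +
          cost (subGraph G (distClass G u 2)) w c f₂ ∧
        ((cost (subGraph G (distClass G u 0)) w c f₀ =
            OPT (subGraph G (distClass G u 0)) w c (subDemand d (distClass G u 0)) →
          cost (subGraph G (distClass G u 1)) w c f₁ =
            OPT (subGraph G (distClass G u 1)) w c (subDemand d (distClass G u 1)) →
          cost (subGraph G (distClass G u 2)) w c f₂ =
            OPT (subGraph G (distClass G u 2)) w c (subDemand d (distClass G u 2)) →
          cost G w c (fun a b => f₀ a b + f₁ a b + f₂ a b) ≤ 3 * OPT G w c d))) := by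
  refine ⟨fun i _ f hf => ⟨hf.restrict_subGraph, cost_restrict_subGraph_le hw hc hf.1.1,
    OPT_subGraph_le hw hc d⟩, fun f₀ f₁ f₂ h₀ h₁ h₂ => ?_⟩
  have hcost : cost G w c (fun a b => f₀ a b + f₁ a b + f₂ a b) ≤
      cost (subGraph G (distClass G u 0)) w c f₀ +
      cost (subGraph G (distClass G u 1)) w c f₁ +
      cost (subGraph G (distClass G u 2)) w c f₂ := by
    rw [← h₀.1.cost_eq (subGraph_le _), ← h₁.1.cost_eq (subGraph_le _),
      ← h₂.1.cost_eq (subGraph_le _)]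
    exact (cost_add_le hw (fun a b => f₀ a b + f₁ a b) f₂).trans
      (add_le_add (cost_add_le hw f₀ f₁) le_rfl)
  refine ⟨feasible_add_three (mem_distClass_or G u) h₀ h₁ h₂, hcost, fun e₀ e₁ e₂ => ?_⟩
  calc _ ≤ _ := hcost
    _ ≤ OPT G w c d + OPT G w c d + OPT G w c d := by
      rw [e₀, e₁, e₂]
      gcongr <;> exact OPT_subGraph_le hw hc d
    _ = 3 * OPT G w c d := by ring

/-- decomposition of a connected instance by distance classes mod 3.
(a) The restriction of any feasible assignment for `G` is feasible for each
subinstance `G_i` at no larger cost, so `OPT(G_i) ≤ OPT(G)`;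
(b) the sum of feasible assignments for `G_0,G_1,G_2` is feasible for `G` of cost
at most the sum of the three costs; consequently optimal assignments for the
`G_i` combine to an assignment of cost at most `3·OPT(G)`. -/
theorem three_layer_decomposition (G : SimpleGraph V) [DecidableRel G.Adj]
    (hG : G.Connected)
    (w c d : V → ℝ) (hw : ∀ v, 0 ≤ w v) (hc : ∀ v, 0 < c v) (hd : ∀ v, 0 ≤ d v)
    (u : V) :
    (∀ i : ℕ, i < 3 → ∀ f, Feasible G d f →
        Feasible (subGraph G (distClass G u i)) (subDemand d (distClass G u i))
          (fun a b => if b ∈ closedNbhd (subGraph G (distClass G u i)) a then f a b else 0) ∧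
        cost (subGraph G (distClass G u i)) w c
          (fun a b => if b ∈ closedNbhd (subGraph G (distClass G u i)) a then f a b else 0) ≤
          cost G w c f ∧
        OPT (subGraph G (distClass G u i)) w c (subDemand d (distClass G u i)) ≤
          OPT G w c d) ∧
    (∀ f₀ f₁ f₂,
        Feasible (subGraph G (distClass G u 0)) (subDemand d (distClass G u 0)) f₀ →
        Feasible (subGraph G (distClass G u 1)) (subDemand d (distClass G u 1)) f₁ →
        Feasible (subGraph G (distClass G u 2)) (subDemand d (distClass G u 2)) f₂ →
        Feasible G d (fun a b => f₀ a b + f₁ a b + f₂ a b) ∧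
        cost G w c (fun a b => f₀ a b + f₁ a b + f₂ a b) ≤
          cost (subGraph G (distClass G u 0)) w c f₀ +
          cost (subGraph G (distClass G u 1)) w c f₁ +
          cost (subGraph G (distClass G u 2)) w c f₂ ∧
        ((cost (subGraph G (distClass G u 0)) w c f₀ =
            OPT (subGraph G (distClass G u 0)) w c (subDemand d (distClass G u 0)) →
          cost (subGraph G (distClass G u 1)) w c f₁ =
            OPT (subGraph G (distClass G u 1)) w c (subDemand d (distClass G u 1)) →
          cost (subGraph G (distClass G u 2)) w c f₂ =
            OPT (subGraph G (distClass G u 2)) w c (subDemand d (distClass G u 2)) →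
          cost G w c (fun a b => f₀ a b + f₁ a b + f₂ a b) ≤ 3 * OPT G w c d))) :=
  three_layer_decomposition_general G w c d hw hc u
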